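/- Let V = F_2^{2n+1}, n > 1, with basis e_0,…,e_{2n}, and define M ∈ GL(V) by M(v_0,v_1,…,v_{2n}) = (v_0, v_1, v_2, v_0 + v_3 + v_4, v_4, v_5, …, v_{2n}). Then M stabilizes the cubic function ω_D(v) = Σ_{i=1}^n v_0 v_{2i-1} v_{2i} (i.e., ω_D ∘ M = ω_D), but M does not preserve the quadratic form q_D(v) = Σ_{i=1}^n v_{2i-1} v_{2i} restricted to the hyperplane v_0 = 0 (identified with F_2^{2n}). -/
import Mathlib


namespace Stmt16

variable (n : ℕ) (hn : 1 < n)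

/-- The map `M(v₀,v₁,…,v_{2n}) = (v₀, v₁, v₂, v₀+v₃+v₄, v₄, v₅, …, v_{2n})` on `𝔽₂^{2n+1}`. -/
def Mfun (v : Fin (2 * n + 1) → ZMod 2) : Fin (2 * n + 1) → ZMod 2 :=
  fun j => if j.val = 3 then v 0 + v ⟨3, by omega⟩ + v ⟨4, by omega⟩ else v j

/-- The induced map `(v₁,…,v_{2n}) ↦ (v₁, v₂, v₃+v₄, v₄, v₅, …, v_{2n})` on the
hyperplane `{v₀ = 0}`, identified with `𝔽₂^{2n}`. -/
def mfun (w : Fin (2 * n) → ZMod 2) : Fin (2 * n) → ZMod 2 :=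
  fun j => if j.val = 2 then w ⟨2, by omega⟩ + w ⟨3, by omega⟩ else w j

/-- The cubic function `ω_D(v) = Σ_{i=1}^n v₀ v_{2i-1} v_{2i}` on `𝔽₂^{2n+1}`. -/
def omegaD (v : Fin (2 * n + 1) → ZMod 2) : ZMod 2 :=
  ∑ i : Fin n,
    v 0 * v ⟨2 * i.val + 1, by have := i.isLt; omega⟩ * v ⟨2 * i.val + 2, by have := i.isLt; omega⟩

/-- The quadratic form `q_D(w) = Σ_{i=1}^n w_{2i-1} w_{2i}` on `𝔽₂^{2n}`. -/
def qD (w : Fin (2 * n) → ZMod 2) : ZMod 2 :=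
  ∑ i : Fin n,
    w ⟨2 * i.val, by have := i.isLt; omega⟩ * w ⟨2 * i.val + 1, by have := i.isLt; omega⟩

end Stmt16

section Aux

variable (n : ℕ) (hn : 1 < n)

/-- `Mfun` as a linear map. -/
def Mlin : (Fin (2 * n + 1) → ZMod 2) →ₗ[ZMod 2] (Fin (2 * n + 1) → ZMod 2) where
  toFun := Stmt16.Mfun n hn
  map_add' v w := by
    funext j
    simp only [Stmt16.Mfun, Pi.add_apply]
    split <;> ring
  map_smul' c v := by
    funext j
    simp only [Stmt16.Mfun, Pi.smul_apply, RingHom.id_apply, smul_eq_mul]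
    split <;> ring

lemma Mfun_invol : Function.Involutive (Stmt16.Mfun n hn) := by
  intro v
  funext j
  by_cases h : j.val = 3
  · have hj : j = ⟨3, by omega⟩ := by exact Fin.ext h
    rw [hj]
    show (Stmt16.Mfun n hn v 0 + Stmt16.Mfun n hn v ⟨3, by omega⟩ +
        Stmt16.Mfun n hn v ⟨4, by omega⟩ : ZMod 2) = _
    have e0 : Stmt16.Mfun n hn v 0 = v 0 := by simp [Stmt16.Mfun]
    have e3 : Stmt16.Mfun n hn v ⟨3, by omega⟩ = v 0 + v ⟨3, by omega⟩ + v ⟨4, by omega⟩ := by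
      simp [Stmt16.Mfun]
    have e4 : Stmt16.Mfun n hn v ⟨4, by omega⟩ = v ⟨4, by omega⟩ := by
      simp [Stmt16.Mfun]
    rw [e0, e3, e4]
    generalize v 0 = a
    generalize v ⟨3, by omega⟩ = b
    generalize v ⟨4, by omega⟩ = c
    revert a b c; decide
  · simp [Stmt16.Mfun, h]

end Aux

/-- for `n > 1`, the map `M ∈ GL_{2n+1}(𝔽₂)` defined by
`M(v₀,…,v_{2n}) = (v₀,v₁,v₂, v₀+v₃+v₄, v₄,…,v_{2n})` stabilizes the cubic function
`ω_D(v) = Σ_{i=1}^n v₀v_{2i-1}v_{2i}` (i.e. `ω_D ∘ M = ω_D`), preserves the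
hyperplane `{v₀ = 0} ≅ 𝔽₂^{2n}` inducing on it the map
`(v₁,…,v_{2n}) ↦ (v₁,v₂,v₃+v₄,v₄,…,v_{2n})`, which does NOT preserve the quadratic
form `q_D(w) = Σ_{i=1}^n w_{2i-1}w_{2i}`. -/
theorem stmt_16 (n : ℕ) (hn : 1 < n) :
    (∃ g : (Fin (2 * n + 1) → ZMod 2) ≃ₗ[ZMod 2] (Fin (2 * n + 1) → ZMod 2),
      ⇑g = Stmt16.Mfun n hn) ∧
    (∀ v, Stmt16.omegaD n (Stmt16.Mfun n hn v) = Stmt16.omegaD n v) ∧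
    (∀ v : Fin (2 * n + 1) → ZMod 2, v 0 = 0 → (Stmt16.Mfun n hn v) 0 = 0) ∧
    (∀ v : Fin (2 * n + 1) → ZMod 2, v 0 = 0 → ∀ i : Fin (2 * n),
      Stmt16.Mfun n hn v ⟨i.val + 1, by have := i.isLt; omega⟩
        = Stmt16.mfun n hn (fun i : Fin (2 * n) => v ⟨i.val + 1, by have := i.isLt; omega⟩) i) ∧
    ¬ (∀ w : Fin (2 * n) → ZMod 2, Stmt16.qD n (Stmt16.mfun n hn w) = Stmt16.qD n w) := by
  refine ⟨⟨LinearEquiv.ofInvolutive (Mlin n hn) (Mfun_invol n hn), rfl⟩, ?_, ?_, ?_, ?_⟩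
  · -- omegaD invariance
    intro v
    unfold Stmt16.omegaD
    apply Finset.sum_congr rfl
    intro i _
    have h0 : Stmt16.Mfun n hn v 0 = v 0 := by
      simp [Stmt16.Mfun]
    rw [h0]
    by_cases h : 2 * i.val + 1 = 3
    · have hi : i.val = 1 := by omega
      have h1 : Stmt16.Mfun n hn v ⟨2 * i.val + 1, by omega⟩ =
          v 0 + v ⟨3, by omega⟩ + v ⟨4, by omega⟩ := by
        simp [Stmt16.Mfun, h]
      have h2 : Stmt16.Mfun n hn v ⟨2 * i.val + 2, by omega⟩ = v ⟨2 * i.val + 2, by omega⟩ := by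
        simp [Stmt16.Mfun, hi]
      rw [h1, h2]
      have e3 : (⟨2 * i.val + 1, by omega⟩ : Fin (2 * n + 1)) = ⟨3, by omega⟩ := by
        simp [Fin.ext_iff, h]
      have e4 : (⟨2 * i.val + 2, by omega⟩ : Fin (2 * n + 1)) = ⟨4, by omega⟩ := by
        simp [Fin.ext_iff]; omega
      rw [e3, e4]
      generalize v 0 = a
      generalize v ⟨3, by omega⟩ = b
      generalize v ⟨4, by omega⟩ = c
      revert a b c; decide
    · have h1 : Stmt16.Mfun n hn v ⟨2 * i.val + 1, by omega⟩ =
          v ⟨2 * i.val + 1, by omega⟩ := by simp [Stmt16.Mfun, h]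
      have h2 : Stmt16.Mfun n hn v ⟨2 * i.val + 2, by omega⟩ =
          v ⟨2 * i.val + 2, by omega⟩ := by
        have : 2 * i.val + 2 ≠ 3 := by omega
        simp [Stmt16.Mfun, this]
      rw [h1, h2]
  · intro v hv
    simpa [Stmt16.Mfun] using hv
  · -- induced map on hyperplane
    intro v hv i
    simp only [Stmt16.Mfun, Stmt16.mfun]
    by_cases h : i.val = 2
    · have e : (⟨i.val + 1, by omega⟩ : Fin (2 * n + 1)) = ⟨3, by omega⟩ := by
        simp [Fin.ext_iff, h]
      simp only [h]
      norm_num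
      rw [hv]
    · have h' : i.val + 1 ≠ 3 := by omega
      simp [h, h']
  · -- counterexample
    intro H
    set w : Fin (2 * n) → ZMod 2 := fun j => if j.val = 3 then 1 else 0 with hw
    have hq : Stmt16.qD n w = 0 := by
      unfold Stmt16.qD
      apply Finset.sum_eq_zero
      intro i _
      have : 2 * i.val ≠ 3 := by omega
      simp [hw, this]
    have hq' : Stmt16.qD n (Stmt16.mfun n hn w) = 1 := by
      unfold Stmt16.qD
      rw [Finset.sum_eq_single ⟨1, by omega⟩]
      · simp [Stmt16.mfun, hw]
      · intro i _ hi
        have h2 : 2 * i.val ≠ 2 := by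
          intro h; apply hi; simp [Fin.ext_iff]; omega
        have h3 : 2 * i.val + 1 ≠ 2 := by omega
        have h2' : 2 * i.val ≠ 3 := by omega
        have h3' : 2 * i.val + 1 ≠ 3 := by
          intro h; apply hi; simp [Fin.ext_iff]; omega
        simp [Stmt16.mfun, hw, h2, h3, h2', h3']
      · intro h; exact absurd (Finset.mem_univ _) h
    rw [H w, hq] at hq'
    exact one_ne_zero hq'.symm
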